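/- Let A = [a_{ij}] be an n×n matrix of entire functions, with a_{ij}(z) = ∑_{k=0}^∞ \hat{a_{ij}}(k) z^k, and let \hat{A}(k) = [\hat{a_{ij}}(k)] ∈ ℂ^{n×n}. Then all entries a_{ij} belong to A(p) if and only if sup_{k∈ℕ₀} p(k)·‖\hat{A}(k)‖_{2,2} < ∞, where ‖·‖_{2,2} is the operator norm on ℂ^{n×n} induced by the Euclidean norm on ℂ^n. Moreover, if A ∈ A(p)^{n×n}, then sup_{k∈ℕ₀} p(k)·‖\hat{A}(k)‖_{2,2} ≤ n‖A‖, where ‖A‖ is the operator norm of the map v ↦ Av on A(p)^n equipped with the norm ‖v‖₂² = ∑_{i=1}^n ‖v_i‖² (matrix multiplication over A(p)). -/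

import Mathlib

open scoped BigOperators

/-- A weight: a sequence of positive reals. -/
structure GoodWeight : Type where
  p : ℕ → ℝ
  pos : ∀ n, 0 < p n

namespace GoodWeight

/-- The growth condition `lim_{n→∞} p(n)^(1/n) = ∞`. -/
def Grows (w : GoodWeight) : Prop :=
  Filter.Tendsto (fun n : ℕ => w.p n ^ ((n : ℝ)⁻¹)) Filter.atTop Filter.atTop

/-- The Banach algebra `A(p)`, in its sequence model: a sequence `a : ℕ → ℂ` (the
Taylor coefficients at `0` of the corresponding entire function) such that
`sup_n p(n)|a(n)| < ∞`. -/
def Ap (w : GoodWeight) : Type :=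
  {a : ℕ → ℂ // ∃ C : ℝ, ∀ n, w.p n * ‖a n‖ ≤ C}

namespace Ap

variable {w : GoodWeight}

instance : Zero w.Ap :=
  ⟨⟨fun _ => 0, 0, fun n => by simp⟩⟩

instance : Add w.Ap :=
  ⟨fun a b =>
    ⟨fun n => a.1 n + b.1 n, by
      obtain ⟨C, hC⟩ := a.2
      obtain ⟨D, hD⟩ := b.2
      refine ⟨C + D, fun n => ?_⟩
      have h1 : ‖a.1 n + b.1 n‖ ≤ ‖a.1 n‖ + ‖b.1 n‖ :=
        norm_add_le _ _
      calc w.p n * ‖a.1 n + b.1 n‖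
          ≤ w.p n * ‖a.1 n‖ + w.p n * ‖b.1 n‖ := by
            rw [← mul_add]; exact mul_le_mul_of_nonneg_left h1 (w.pos n).le
        _ ≤ C + D := add_le_add (hC n) (hD n)⟩⟩

instance : Neg w.Ap :=
  ⟨fun a =>
    ⟨fun n => -a.1 n, by
      obtain ⟨C, hC⟩ := a.2
      exact ⟨C, fun n => by simpa using hC n⟩⟩⟩

/-- The weighted Hadamard multiplication `(f ∗ g)(n) = p(n) f̂(n) ĝ(n)`. -/
instance : Mul w.Ap :=
  ⟨fun a b =>
    ⟨fun n => (w.p n : ℂ) * a.1 n * b.1 n, by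
      obtain ⟨C, hC⟩ := a.2
      obtain ⟨D, hD⟩ := b.2
      refine ⟨C * D, fun n => ?_⟩
      have e : w.p n * ‖(w.p n : ℂ) * a.1 n * b.1 n‖
          = (w.p n * ‖a.1 n‖) * (w.p n * ‖b.1 n‖) := by
        rw [norm_mul, norm_mul, Complex.norm_real, Real.norm_eq_abs, abs_of_pos (w.pos n)]; ring
      rw [e]
      have h0C : (0:ℝ) ≤ C :=
        le_trans (mul_nonneg (w.pos 0).le (norm_nonneg _)) (hC 0)
      exact mul_le_mul (hC n) (hD n) (mul_nonneg (w.pos n).le (norm_nonneg _)) h0C⟩⟩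

/-- The identity element `ε`, with coefficients `1/p(n)`. -/
noncomputable instance : One w.Ap :=
  ⟨⟨fun n => ((w.p n : ℂ))⁻¹, 1, fun n => by
      dsimp only
      rw [norm_inv, Complex.norm_real, Real.norm_eq_abs, abs_of_pos (w.pos n),
        mul_inv_cancel₀ (w.pos n).ne']⟩⟩

instance : SMul ℂ w.Ap :=
  ⟨fun c a =>
    ⟨fun n => c * a.1 n, by
      obtain ⟨C, hC⟩ := a.2
      refine ⟨‖c‖ * C, fun n => ?_⟩
      dsimp only
      rw [norm_mul]
      calc w.p n * (‖c‖ * ‖a.1 n‖)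
          = ‖c‖ * (w.p n * ‖a.1 n‖) := by ring
        _ ≤ ‖c‖ * C := mul_le_mul_of_nonneg_left (hC n) (norm_nonneg c)⟩⟩

noncomputable instance : CommRing w.Ap where
  add := (· + ·)
  add_assoc a b c := Subtype.ext (funext fun n => add_assoc _ _ _)
  zero := 0
  zero_add a := Subtype.ext (funext fun n => zero_add _)
  add_zero a := Subtype.ext (funext fun n => add_zero _)
  add_comm a b := Subtype.ext (funext fun n => add_comm _ _)
  nsmul := nsmulRec
  zsmul := zsmulRec
  mul := (· * ·)
  mul_assoc a b c := Subtype.ext (funext fun n => by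
    show (w.p n : ℂ) * ((w.p n : ℂ) * a.1 n * b.1 n) * c.1 n
        = (w.p n : ℂ) * a.1 n * ((w.p n : ℂ) * b.1 n * c.1 n)
    ring)
  one := 1
  one_mul a := Subtype.ext (funext fun n => by
    show (w.p n : ℂ) * ((w.p n : ℂ))⁻¹ * a.1 n = a.1 n
    have h : ((w.p n : ℝ) : ℂ) ≠ 0 := by exact_mod_cast (w.pos n).ne'
    rw [mul_inv_cancel₀ h, one_mul])
  mul_one a := Subtype.ext (funext fun n => by
    show (w.p n : ℂ) * a.1 n * ((w.p n : ℂ))⁻¹ = a.1 n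
    have h : ((w.p n : ℝ) : ℂ) ≠ 0 := by exact_mod_cast (w.pos n).ne'
    field_simp)
  left_distrib a b c := Subtype.ext (funext fun n => by
    show (w.p n : ℂ) * a.1 n * (b.1 n + c.1 n)
        = (w.p n : ℂ) * a.1 n * b.1 n + (w.p n : ℂ) * a.1 n * c.1 n
    ring)
  right_distrib a b c := Subtype.ext (funext fun n => by
    show (w.p n : ℂ) * (a.1 n + b.1 n) * c.1 n
        = (w.p n : ℂ) * a.1 n * c.1 n + (w.p n : ℂ) * b.1 n * c.1 n
    ring)
  zero_mul a := Subtype.ext (funext fun n => by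
    show (w.p n : ℂ) * 0 * a.1 n = 0
    ring)
  mul_zero a := Subtype.ext (funext fun n => by
    show (w.p n : ℂ) * a.1 n * 0 = 0
    ring)
  mul_comm a b := Subtype.ext (funext fun n => by
    show (w.p n : ℂ) * a.1 n * b.1 n = (w.p n : ℂ) * b.1 n * a.1 n
    ring)
  neg := Neg.neg
  neg_add_cancel a := Subtype.ext (funext fun n => neg_add_cancel _)

instance : Module ℂ w.Ap where
  smul := (· • ·)
  one_smul a := Subtype.ext (funext fun n => by
    show (1 : ℂ) * a.1 n = a.1 n
    ring)
  mul_smul c d a := Subtype.ext (funext fun n => by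
    show (c * d) * a.1 n = c * (d * a.1 n)
    ring)
  smul_zero c := Subtype.ext (funext fun n => by
    show c * 0 = 0
    ring)
  smul_add c a b := Subtype.ext (funext fun n => by
    show c * (a.1 n + b.1 n) = c * a.1 n + c * b.1 n
    ring)
  add_smul c d a := Subtype.ext (funext fun n => by
    show (c + d) * a.1 n = c * a.1 n + d * a.1 n
    ring)
  zero_smul a := Subtype.ext (funext fun n => by
    show (0 : ℂ) * a.1 n = 0
    ring)

noncomputable instance : Algebra ℂ w.Ap :=
  Algebra.ofModule
    (fun c a b => Subtype.ext (funext fun n => by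
      show (w.p n : ℂ) * (c * a.1 n) * b.1 n = c * ((w.p n : ℂ) * a.1 n * b.1 n)
      ring))
    (fun c a b => Subtype.ext (funext fun n => by
      show (w.p n : ℂ) * a.1 n * (c * b.1 n) = c * ((w.p n : ℂ) * a.1 n * b.1 n)
      ring))

theorem bddAbove (a : w.Ap) :
    BddAbove (Set.range fun n => w.p n * ‖a.1 n‖) := by
  obtain ⟨C, hC⟩ := a.2
  exact ⟨C, by rintro x ⟨k, rfl⟩; exact hC k⟩

/-- The norm `‖f‖ = sup_n p(n) |f̂(n)|`, as an `AddGroupNorm`. -/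
noncomputable def gnorm (w : GoodWeight) : AddGroupNorm w.Ap where
  toFun a := ⨆ n, w.p n * ‖a.1 n‖
  map_zero' := by
    have h : ∀ n : ℕ, w.p n * ‖(0 : w.Ap).1 n‖ = 0 := fun n => by
      show w.p n * ‖0‖ = 0; simp
    simp [h]
  add_le' a b := by
    apply ciSup_le
    intro n
    have h1 : ‖a.1 n + b.1 n‖ ≤ ‖a.1 n‖ + ‖b.1 n‖ :=
      norm_add_le _ _
    calc w.p n * ‖(a + b).1 n‖
        ≤ w.p n * ‖a.1 n‖ + w.p n * ‖b.1 n‖ := by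
          rw [← mul_add]; exact mul_le_mul_of_nonneg_left h1 (w.pos n).le
      _ ≤ (⨆ k, w.p k * ‖a.1 k‖) + ⨆ k, w.p k * ‖b.1 k‖ :=
          add_le_add (le_ciSup (bddAbove a) n) (le_ciSup (bddAbove b) n)
  neg' a := by
    have h : (fun n => w.p n * ‖(-a).1 n‖)
        = fun n => w.p n * ‖a.1 n‖ := by
      funext n
      show w.p n * ‖-a.1 n‖ = w.p n * ‖a.1 n‖
      rw [norm_neg]
    show (⨆ n, w.p n * ‖(-a).1 n‖) = ⨆ n, w.p n * ‖a.1 n‖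
    rw [h]
  eq_zero_of_map_eq_zero' a h := by
    apply Subtype.ext
    funext n
    have h1 : w.p n * ‖a.1 n‖ ≤ 0 := h ▸ le_ciSup (bddAbove a) n
    have h2 : (0:ℝ) ≤ w.p n * ‖a.1 n‖ :=
      mul_nonneg (w.pos n).le (norm_nonneg _)
    have h3 : ‖a.1 n‖ = 0 := by
      rcases mul_eq_zero.mp (le_antisymm h1 h2) with h' | h'
      · exact absurd h' (w.pos n).ne'
      · exact h'
    exact norm_eq_zero.mp h3

noncomputable instance : NormedAddCommGroup w.Ap :=
  (gnorm w).toNormedAddCommGroup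

theorem norm_def (a : w.Ap) : ‖a‖ = ⨆ n, w.p n * ‖a.1 n‖ := rfl

theorem le_norm (a : w.Ap) (n : ℕ) : w.p n * ‖a.1 n‖ ≤ ‖a‖ :=
  le_ciSup (bddAbove a) n

theorem norm_nonneg' (a : w.Ap) : 0 ≤ ‖a‖ :=
  le_trans (mul_nonneg (w.pos 0).le (norm_nonneg _)) (le_norm a 0)

noncomputable instance : NormedCommRing w.Ap :=
  { (inferInstance : NormedAddCommGroup w.Ap), (inferInstance : CommRing w.Ap) with
    norm_mul_le := by
      intro a b
      apply ciSup_le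
      intro n
      have e : w.p n * ‖(a * b).1 n‖
          = (w.p n * ‖a.1 n‖) * (w.p n * ‖b.1 n‖) := by
        show w.p n * ‖(w.p n : ℂ) * a.1 n * b.1 n‖ = _
        rw [norm_mul, norm_mul, Complex.norm_real, Real.norm_eq_abs, abs_of_pos (w.pos n)]; ring
      rw [e]
      exact mul_le_mul (le_norm a n) (le_norm b n)
        (mul_nonneg (w.pos n).le (norm_nonneg _)) (norm_nonneg' a) }

noncomputable instance : NormedSpace ℂ w.Ap where
  norm_smul_le c a := by
    apply ciSup_le
    intro n
    have e : w.p n * ‖(c • a).1 n‖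
        = ‖c‖ * (w.p n * ‖a.1 n‖) := by
      show w.p n * ‖c * a.1 n‖ = _
      rw [norm_mul]; ring
    rw [e]
    calc ‖c‖ * (w.p n * ‖a.1 n‖)
        ≤ ‖c‖ * ‖a‖ := mul_le_mul_of_nonneg_left (le_norm a n) (norm_nonneg c)
      _ = ‖c‖ * ‖a‖ := rfl

noncomputable instance : NormedAlgebra ℂ w.Ap :=
  { (inferInstance : Algebra ℂ w.Ap) with
    norm_smul_le := fun c a => norm_smul_le c a }

end Ap

end GoodWeight


namespace GoodWeight

/-- The operator norm `‖M‖₂,₂` of a complex `n × n` matrix, induced by the Euclidean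
norm on `ℂⁿ`. -/
noncomputable def l2OpNorm {n : ℕ} (M : Matrix (Fin n) (Fin n) ℂ) : ℝ :=
  ‖(Matrix.toEuclideanCLM (𝕜 := ℂ) M :
      EuclideanSpace ℂ (Fin n) →L[ℂ] EuclideanSpace ℂ (Fin n))‖

/-- The Euclidean-type norm `‖v‖₂² = ∑ ‖vᵢ‖²` on `A(p)ⁿ`. -/
noncomputable def vecNorm {w : GoodWeight} {n : ℕ} (v : Fin n → w.Ap) : ℝ :=
  Real.sqrt (∑ i, ‖v i‖ ^ 2)

/-- The operator norm of `v ↦ A ∗ v` on `A(p)ⁿ` (with the Euclidean-type norm). -/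
noncomputable def matOpNorm {w : GoodWeight} {n : ℕ} (A : Matrix (Fin n) (Fin n) w.Ap) : ℝ :=
  sSup {r : ℝ | ∃ v : Fin n → w.Ap, vecNorm v ≤ 1 ∧ r = vecNorm (A.mulVec v)}

end GoodWeight

/-!
Testing `A` on the vectors `v = (x₁ ε, …, xₙ ε)`, `x ∈ ℂⁿ`, gives the bound: `‖ε‖ = 1`, so `v`
has norm `|x|₂`, and the `k`-th coefficient of `A v` is `Â(k) x`. Since `p(k)|f̂(k)| ≤ ‖f‖` for every
`f ∈ A(p)`, this yields `p(k)|Â(k) x|₂ ≤ ‖A v‖ ≤ ‖A‖ |x|₂`, i.e. `p(k)‖Â(k)‖₂,₂ ≤ ‖A‖`. Conversely,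
every entry of a matrix is bounded by its operator norm.
-/

namespace GoodWeight

variable {w : GoodWeight} {n : ℕ}

namespace Ap

def coeff (w : GoodWeight) (k : ℕ) : w.Ap →ₗ[ℂ] ℂ where
  toFun a := a.1 k
  map_add' _ _ := rfl
  map_smul' _ _ := rfl

@[simp]
lemma coeff_apply (k : ℕ) (a : w.Ap) : coeff w k a = a.1 k := rfl

lemma norm_one : ‖(1 : w.Ap)‖ = 1 := by
  have h : ∀ k, w.p k * ‖(1 : w.Ap).1 k‖ = 1 := fun k => by
    change w.p k * ‖((w.p k : ℂ))⁻¹‖ = 1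
    rw [norm_inv, Complex.norm_real, Real.norm_of_nonneg (w.pos k).le,
      mul_inv_cancel₀ (w.pos k).ne']
  simp only [norm_def, h, ciSup_const]

end Ap

lemma norm_entry_le_l2OpNorm (M : Matrix (Fin n) (Fin n) ℂ) (i j : Fin n) :
    ‖M i j‖ ≤ l2OpNorm M := by
  set T := Matrix.toEuclideanCLM (𝕜 := ℂ) M
  calc ‖M i j‖ = ‖T (EuclideanSpace.single j 1) i‖ := by
        simp [T, Matrix.mulVec_single]
    _ ≤ ‖T (EuclideanSpace.single j 1)‖ := PiLp.norm_apply_le _ i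
    _ ≤ l2OpNorm M := by
        simpa [l2OpNorm, T] using T.le_opNorm (EuclideanSpace.single j 1)

lemma norm_le_vecNorm (v : Fin n → w.Ap) (j : Fin n) : ‖v j‖ ≤ vecNorm v :=
  Real.le_sqrt_of_sq_le <|
    Finset.single_le_sum (f := fun i => ‖v i‖ ^ 2) (fun _ _ => sq_nonneg _) (Finset.mem_univ j)

lemma le_matOpNorm (A : Matrix (Fin n) (Fin n) w.Ap) {v : Fin n → w.Ap} (hv : vecNorm v ≤ 1) :
    vecNorm (A.mulVec v) ≤ matOpNorm A := by
  refine le_csSup ⟨Real.sqrt (∑ i, (∑ j, ‖A i j‖) ^ 2), ?_⟩ ⟨v, hv, rfl⟩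
  rintro _ ⟨u, hu, rfl⟩
  unfold vecNorm
  gcongr with i
  calc ‖A.mulVec u i‖ ≤ ∑ j, ‖A i j * u j‖ :=
        norm_sum_le (f := fun j => A i j * u j) _
    _ ≤ ∑ j, ‖A i j‖ * 1 := by
        gcongr with j
        exact (norm_mul_le _ _).trans
          (mul_le_mul_of_nonneg_left ((norm_le_vecNorm u j).trans hu) (norm_nonneg _))
    _ = ∑ j, ‖A i j‖ := by simp

lemma matOpNorm_nonneg (A : Matrix (Fin n) (Fin n) w.Ap) : 0 ≤ matOpNorm A := by
  simpa [vecNorm] using le_matOpNorm A (v := 0) (by simp [vecNorm])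

lemma vecNorm_smul_one (x : EuclideanSpace ℂ (Fin n)) :
    vecNorm (fun j => x j • (1 : w.Ap)) = ‖x‖ := by
  simp [vecNorm, EuclideanSpace.norm_eq, norm_smul, Ap.norm_one]

lemma weight_mul_norm_coeff_le_vecNorm (v : Fin n → w.Ap) (k : ℕ) :
    w.p k * ‖(WithLp.toLp 2 fun i => (v i).1 k : EuclideanSpace ℂ (Fin n))‖ ≤ vecNorm v := by
  rw [EuclideanSpace.norm_eq, vecNorm, ← Real.sqrt_sq (w.pos k).le,
    ← Real.sqrt_mul (sq_nonneg _), Finset.mul_sum]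
  gcongr with i
  rw [← mul_pow]
  exact pow_le_pow_left₀ (mul_nonneg (w.pos k).le (norm_nonneg _)) (Ap.le_norm (v i) k) 2

lemma coeff_mulVec_smul_one (A : Matrix (Fin n) (Fin n) w.Ap) (x : EuclideanSpace ℂ (Fin n))
    (k : ℕ) :
    WithLp.toLp 2 (fun i => (A.mulVec fun j => x j • (1 : w.Ap)) i |>.1 k) =
      Matrix.toEuclideanCLM (𝕜 := ℂ) (Matrix.of fun i j => (A i j).1 k) x := by
  ext i
  simp only [Matrix.mulVec, dotProduct, mul_smul_comm, mul_one]
  rw [← Ap.coeff_apply, map_sum]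
  simp [Matrix.mulVec, dotProduct, mul_comm]

lemma weight_mul_l2OpNorm_coeff_le_matOpNorm (A : Matrix (Fin n) (Fin n) w.Ap) (k : ℕ) :
    w.p k * l2OpNorm (Matrix.of fun i j => (A i j).1 k) ≤ matOpNorm A := by
  rw [← le_div_iff₀' (w.pos k)]
  refine ContinuousLinearMap.opNorm_le_of_unit_norm
    (div_nonneg (matOpNorm_nonneg A) (w.pos k).le) fun x hx => ?_
  rw [le_div_iff₀' (w.pos k), ← coeff_mulVec_smul_one]
  calc _ ≤ vecNorm (A.mulVec fun j => x j • (1 : w.Ap)) := weight_mul_norm_coeff_le_vecNorm _ k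
    _ ≤ matOpNorm A := le_matOpNorm A (by rw [vecNorm_smul_one, hx])

end GoodWeight

theorem matrix_coeff_norm_general (w : GoodWeight) (n : ℕ) :
    (∀ a : Fin n → Fin n → ℕ → ℂ,
      (∀ i j, ∃ C : ℝ, ∀ k, w.p k * ‖a i j k‖ ≤ C) ↔
        ∃ C : ℝ, ∀ k, w.p k * GoodWeight.l2OpNorm (Matrix.of fun i j => a i j k) ≤ C) ∧
    (∀ A : Matrix (Fin n) (Fin n) w.Ap, ∀ k : ℕ,
      w.p k * GoodWeight.l2OpNorm (Matrix.of fun i j => (A i j).1 k)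
        ≤ n * GoodWeight.matOpNorm A) := by
  open GoodWeight in
  refine ⟨fun a => ⟨fun ha => ?_, fun ⟨C, hC⟩ i j => ⟨C, fun k => ?_⟩⟩, fun A k => ?_⟩
  · exact ⟨_, weight_mul_l2OpNorm_coeff_le_matOpNorm (Matrix.of fun i j => ⟨a i j, ha i j⟩)⟩
  · calc w.p k * ‖a i j k‖ ≤ w.p k * l2OpNorm (Matrix.of fun i j => a i j k) := by
          gcongr
          · exact (w.pos k).le
          · simpa using norm_entry_le_l2OpNorm (Matrix.of fun i j => a i j k) i j
      _ ≤ C := hC k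
  · rcases Nat.eq_zero_or_pos n with rfl | hn
    · simp [l2OpNorm, ContinuousLinearMap.opNorm_subsingleton]
    · exact (weight_mul_l2OpNorm_coeff_le_matOpNorm A k).trans
        (le_mul_of_one_le_left (matOpNorm_nonneg A) (by exact_mod_cast hn))

/-- A matrix of entire functions (given by its coefficient matrices
`Â(k) = [â_{ij}(k)]`) has all entries in `A(p)` iff `sup_k p(k) ‖Â(k)‖₂,₂ < ∞`;
moreover for `A ∈ A(p)^{n×n}` one has `sup_k p(k) ‖Â(k)‖₂,₂ ≤ n ‖A‖`. -/
theorem matrix_coeff_norm (w : GoodWeight) (hg : w.Grows) (n : ℕ) (hn : 0 < n) :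
    (∀ a : Fin n → Fin n → ℕ → ℂ,
      (∀ i j, ∃ C : ℝ, ∀ k, w.p k * ‖a i j k‖ ≤ C) ↔
        ∃ C : ℝ, ∀ k, w.p k * GoodWeight.l2OpNorm (Matrix.of fun i j => a i j k) ≤ C) ∧
    (∀ A : Matrix (Fin n) (Fin n) w.Ap, ∀ k : ℕ,
      w.p k * GoodWeight.l2OpNorm (Matrix.of fun i j => (A i j).1 k)
        ≤ n * GoodWeight.matOpNorm A) :=
  matrix_coeff_norm_general w n
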